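/- Let G be a static digraph on n vertices with s,t∈V, let x_ℓ denote the number of simple (s,t)-paths of length ℓ in G, and for τ∈{1,...,n−1} let y_τ denote the number of temporal (s,z)-paths of length at most τ+1 in the temporal graph G_τ (the τ-layer blow-up with an appended edge (t,z,n,1)). Then y_τ = Σ_{ℓ=1}^{τ} C(τ,ℓ)·x_ℓ, and consequently the numbers x_1,...,x_{n−1}, and hence the total number of simple (s,t)-paths Σ_ℓ x_ℓ, are determined from y_1,...,y_{n−1} by the recurrence x_τ = y_τ − Σ_{i=1}^{τ−1} C(τ,i)·x_i. -/

import Mathlib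

/-- A weighted temporal edge: source, destination, availability time,
traversal time, and real cost. -/
structure TEdge (V : Type) where
  src : V
  dst : V
  time : ℕ
  lam : ℕ
  cost : ℝ

variable {V : Type}

/-- Temporal compatibility of consecutive edges. -/
def TEdge.Compat (e f : TEdge V) : Prop := e.dst = f.src ∧ e.time + e.lam ≤ f.time

/-- A temporal (s,z)-walk in the edge set `E`. -/
def IsWalk (E : Set (TEdge V)) (s z : V) (P : List (TEdge V)) : Prop :=
  P ≠ [] ∧ (∀ e ∈ P, e ∈ E) ∧ P.Chain' TEdge.Compat ∧
  (∀ e, P.head? = some e → e.src = s) ∧ (∀ e, P.getLast? = some e → e.dst = z)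

/-- The sequence of vertices visited by a walk. -/
def visitedVerts (P : List (TEdge V)) : List V :=
  (P.head?.elim [] fun e => [e.src]) ++ P.map TEdge.dst

/-- A temporal path: a simple temporal walk. -/
def IsPath (E : Set (TEdge V)) (s z : V) (P : List (TEdge V)) : Prop :=
  IsWalk E s z P ∧ (visitedVerts P).Nodup

/-- Cost of a walk. -/
noncomputable def wcost (P : List (TEdge V)) : ℝ := (P.map TEdge.cost).sum

/-- Arrival time of a walk. -/
def warr (P : List (TEdge V)) : ℕ := P.getLast?.elim 0 fun e => e.time + e.lam

/-- Starting time of a walk. -/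
def wstart (P : List (TEdge V)) : ℕ := P.head?.elim 0 fun e => e.time

/-- Duration of a walk. -/
def wdur (P : List (TEdge V)) : ℕ := warr P - wstart P

/-- `Q` dominates `P` w.r.t. cost and the temporal objective `f`. -/
def Dominates (f : List (TEdge V) → ℕ) (Q P : List (TEdge V)) : Prop :=
  (wcost Q < wcost P ∧ f Q ≤ f P) ∨ (wcost Q ≤ wcost P ∧ f Q < f P)

/-- `P` is efficient within the set `X` w.r.t. cost and objective `f`. -/
def EfficientIn (X : Set (List (TEdge V))) (f : List (TEdge V) → ℕ) (P : List (TEdge V)) : Prop :=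
  P ∈ X ∧ ∀ Q ∈ X, ¬ Dominates f Q P

/-- A simple path in a static digraph, as a nonempty duplicate-free list of
vertices from `s` to `t` along edges of `Eg`. -/
def SIsPath (Eg : Set (V × V)) (s t : V) (p : List V) : Prop :=
  p ≠ [] ∧ p.Chain' (fun a b => (a, b) ∈ Eg) ∧ p.Nodup ∧
  (∀ a, p.head? = some a → a = s) ∧ (∀ a, p.getLast? = some a → a = t)

/-!
A temporal `(s, z)`-path in `G_τ` is a simple static `(s, t)`-path whose edges are given strictly
increasing departure times in `{1, …, τ}`, followed by the edge `(t, z, n, 1)`: that edge is the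
only one entering `z`, nothing leaves `z`, and since `τ < n` it can follow any edge of the layers.
This lift is injective, and the strictly increasing lists of length `ℓ` in `{1, …, τ}` are the
length-`ℓ` sublists of `[1, …, τ]`, of which there are `C(τ, ℓ)`. Summing over the lengths gives
`y_τ`; splitting off the top term `C(τ, τ) x_τ = x_τ` gives the recurrence; and a simple path has
at most `n` vertices.
-/

theorem List.two_le_length_of_head?_of_getLast? {α : Type*} {l : List α} {a b : α}
    (ha : l.head? = some a) (hb : l.getLast? = some b) (hab : a ≠ b) : 2 ≤ l.length := by
  match l, ha, hb with
  | [_], ha, hb => simp_all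
  | _ :: _ :: _, _, _ => simp

theorem List.finite_setOf_and_length_eq {α : Type*} [Finite α] (p : List α → Prop) (k : ℕ) :
    {l | p l ∧ l.length = k}.Finite :=
  (List.finite_length_eq α k).subset fun _ hl => hl.2

theorem Set.ncard_biUnion_finset {ι α : Type*} {I : Finset ι} {f : ι → Set α}
    (hf : ∀ i ∈ I, (f i).Finite) (hd : (I : Set ι).PairwiseDisjoint f) :
    (⋃ i ∈ I, f i).ncard = ∑ i ∈ I, (f i).ncard := by
  rw [← finsum_mem_coe_finset, ← I.finite_toSet.ncard_biUnion hf hd]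
  simp

theorem ncard_setOf_length_le_eq_sum {α : Type*} {p : List α → Prop} (N : ℕ)
    (h2 : ∀ l, p l → 2 ≤ l.length) (hfin : ∀ ℓ, {l | p l ∧ l.length = ℓ + 1}.Finite) :
    {l | p l ∧ l.length ≤ N + 1}.ncard
      = ∑ ℓ ∈ Finset.Icc 1 N, {l | p l ∧ l.length = ℓ + 1}.ncard := by
  have hunion : {l | p l ∧ l.length ≤ N + 1} =
      ⋃ ℓ ∈ Finset.Icc 1 N, {l | p l ∧ l.length = ℓ + 1} := by
    ext l
    simp only [Set.mem_ofPred_eq, Set.mem_iUnion, Finset.mem_Icc, exists_prop]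
    constructor
    · rintro ⟨hl, hlen⟩
      have := h2 l hl
      exact ⟨l.length - 1, by omega, hl, by omega⟩
    · rintro ⟨ℓ, hℓ, hl, hlen⟩
      exact ⟨hl, by omega⟩
  rw [hunion, Set.ncard_biUnion_finset (fun ℓ _ => hfin ℓ)]
  intro i _ j _ hij
  exact Set.disjoint_left.2 fun l hi hj => hij (by have := hi.2.symm.trans hj.2; omega)

def IsSchedule (τ : ℕ) (ts : List ℕ) : Prop :=
  ts.IsChain (· < ·) ∧ ∀ i ∈ ts, 1 ≤ i ∧ i ≤ τ

theorem isSchedule_cons_iff {τ i : ℕ} {ts : List ℕ} :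
    IsSchedule τ (i :: ts) ↔ (∀ j ∈ ts.head?, i < j) ∧ 1 ≤ i ∧ i ≤ τ ∧ IsSchedule τ ts := by
  simp only [IsSchedule, List.isChain_cons, List.mem_cons, forall_eq_or_imp]
  tauto

theorem isSchedule_iff_sublist {τ : ℕ} {ts : List ℕ} :
    IsSchedule τ ts ↔ ts.Sublist (List.range' 1 τ) := by
  have hrange : (List.range' 1 τ).Pairwise (· < ·) := List.pairwise_lt_range'
  constructor
  · rintro ⟨hchain, hbound⟩
    have hsorted : ts.Pairwise (· < ·) := List.isChain_iff_pairwise.1 hchain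
    refine List.sublist_of_subperm_of_pairwise
      (List.subperm_of_subset hsorted.nodup fun i hi => ?_) hsorted hrange
    have := hbound i hi
    rw [List.mem_range'_1]
    omega
  · intro hsub
    refine ⟨List.isChain_iff_pairwise.2 (hrange.sublist hsub), fun i hi => ?_⟩
    have := List.mem_range'_1.1 (hsub.subset hi)
    omega

theorem setOf_isSchedule_length_eq (τ ℓ : ℕ) :
    {ts | IsSchedule τ ts ∧ ts.length = ℓ} = ↑(List.sublistsLen ℓ (List.range' 1 τ)).toFinset := by
  ext ts
  simp [isSchedule_iff_sublist]

theorem ncard_setOf_isSchedule_length_eq (τ ℓ : ℕ) :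
    {ts | IsSchedule τ ts ∧ ts.length = ℓ}.ncard = τ.choose ℓ := by
  rw [setOf_isSchedule_length_eq, Set.ncard_coe_finset,
    List.toFinset_card_of_nodup (List.nodup_sublistsLen _ List.nodup_range'),
    List.length_sublistsLen, List.length_range']

theorem isWalk_singleton_iff {E : Set (TEdge V)} {s z : V} {e : TEdge V} :
    IsWalk E s z [e] ↔ e ∈ E ∧ e.src = s ∧ e.dst = z := by
  constructor
  · rintro ⟨-, hmem, -, hhead, hlast⟩
    exact ⟨hmem e (by simp), hhead e rfl, hlast e rfl⟩
  · rintro ⟨he, hsrc, hdst⟩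
    exact ⟨by simp, by simpa using he, List.isChain_singleton e, by simpa using hsrc,
      by simpa using hdst⟩

theorem isWalk_cons_cons_iff {E : Set (TEdge V)} {s z : V} {e f : TEdge V} {P : List (TEdge V)} :
    IsWalk E s z (e :: f :: P) ↔
      e ∈ E ∧ e.src = s ∧ e.time + e.lam ≤ f.time ∧ IsWalk E e.dst z (f :: P) := by
  constructor
  · rintro ⟨-, hmem, hchain, hhead, hlast⟩
    obtain ⟨⟨hdst, htime⟩, hchain⟩ := List.isChain_cons_cons.1 hchain
    refine ⟨hmem e (by simp), hhead e rfl, htime, by simp, fun g hg => hmem g (by simp [hg]),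
      hchain, ?_, fun g hg => hlast g (by rwa [List.getLast?_cons_cons])⟩
    simpa using hdst.symm
  · rintro ⟨he, hsrc, htime, -, hmem, hchain, hhead, hlast⟩
    refine ⟨by simp, ?_, List.isChain_cons_cons.2 ⟨⟨(hhead f rfl).symm, htime⟩, hchain⟩,
      by simpa using hsrc, fun g hg => hlast g (by rwa [List.getLast?_cons_cons] at hg)⟩
    simpa [he] using hmem

theorem sIsPath_iff {Eg : Set (V × V)} {s t : V} {p : List V} :
    SIsPath Eg s t p ↔ p.head? = some s ∧ p.getLast? = some t ∧
      (p.IsChain fun u v => (u, v) ∈ Eg) ∧ p.Nodup := by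
  constructor
  · rintro ⟨hne, hchain, hnodup, hhead, hlast⟩
    obtain ⟨a, ha⟩ := Option.ne_none_iff_exists'.1 (mt List.head?_eq_none_iff.1 hne)
    obtain ⟨b, hb⟩ := Option.ne_none_iff_exists'.1 (mt List.getLast?_eq_none_iff.1 hne)
    exact ⟨hhead a ha ▸ ha, hlast b hb ▸ hb, hchain, hnodup⟩
  · rintro ⟨hhead, hlast, hchain, hnodup⟩
    refine ⟨fun h => by simp [h] at hhead, hchain, hnodup, ?_, ?_⟩ <;> simp_all

def blowUpEdges (Eg : Set (V × V)) (t : V) (n τ : ℕ) : Set (TEdge (Option V)) :=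
  {e | ∃ u v i, (u, v) ∈ Eg ∧ 1 ≤ i ∧ i ≤ τ ∧ e = ⟨some u, some v, i, 1, 0⟩} ∪
    {⟨some t, none, n, 1, 0⟩}

/-- The static path `p` with its edges departing at the times `ts`, followed by the edge into
`z = none`. Intended for `ts.length + 1 = p.length`; missing times default to `0`. -/
def liftPath (n : ℕ) : List V → List ℕ → List (TEdge (Option V))
  | [], _ => []
  | [a], _ => [⟨some a, none, n, 1, 0⟩]
  | a :: b :: p, ts => ⟨some a, some b, ts.headD 0, 1, 0⟩ :: liftPath n (b :: p) ts.tail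

section BlowUp

variable {Eg : Set (V × V)} {s t : V} {n τ : ℕ}

theorem map_src_liftPath (p : List V) (ts : List ℕ) :
    (liftPath n p ts).map TEdge.src = p.map some := by
  induction p, ts using liftPath.induct <;> simp_all [liftPath]

theorem map_dst_liftPath {p : List V} (hp : p ≠ []) (ts : List ℕ) :
    (liftPath n p ts).map TEdge.dst = p.tail.map some ++ [none] := by
  induction p, ts using liftPath.induct <;> simp_all [liftPath]

theorem map_time_liftPath {p : List V} {ts : List ℕ} (h : p.length = ts.length + 1) :
    (liftPath n p ts).map TEdge.time = ts ++ [n] := by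
  induction p, ts using liftPath.induct with
  | case1 => simp at h
  | case2 a ts => cases ts <;> simp_all [liftPath]
  | case3 a b p ts ih => cases ts <;> simp_all [liftPath]

theorem length_liftPath (p : List V) (ts : List ℕ) : (liftPath n p ts).length = p.length := by
  simpa using congrArg List.length (map_src_liftPath p ts)

theorem visitedVerts_liftPath {p : List V} (hp : p ≠ []) (ts : List ℕ) :
    visitedVerts (liftPath n p ts) = p.map some ++ [none] := by
  obtain ⟨a, p, rfl⟩ := List.exists_cons_of_ne_nil hp
  have hhead : (liftPath n (a :: p) ts).head?.map TEdge.src = some (some a) := by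
    rw [← List.head?_map, map_src_liftPath]; rfl
  cases h : (liftPath n (a :: p) ts).head? with
  | none => simp [h] at hhead
  | some e =>
    simp only [h, Option.map_some, Option.some.injEq] at hhead
    simp [visitedVerts, h, hhead, map_dst_liftPath hp]

theorem liftPath_inj {p p' : List V} {ts ts' : List ℕ} (h : p.length = ts.length + 1)
    (h' : p'.length = ts'.length + 1) (heq : liftPath n p ts = liftPath n p' ts') :
    p = p' ∧ ts = ts' := by
  constructor
  · have := congrArg (List.map TEdge.src) heq
    rw [map_src_liftPath, map_src_liftPath] at this
    exact List.map_injective_iff.2 (Option.some_injective V) this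
  · have := congrArg (List.map TEdge.time) heq
    rwa [map_time_liftPath h, map_time_liftPath h', List.append_cancel_right_eq] at this

theorem nodup_visitedVerts_liftPath {p : List V} (hp : p ≠ []) (ts : List ℕ) :
    (visitedVerts (liftPath n p ts)).Nodup ↔ p.Nodup := by
  rw [visitedVerts_liftPath hp, List.nodup_append, List.nodup_map_iff (Option.some_injective V)]
  simp

theorem src_ne_none_of_mem_blowUpEdges {e : TEdge (Option V)} (he : e ∈ blowUpEdges Eg t n τ) :
    e.src ≠ none := by
  rcases he with ⟨u, v, i, -, -, -, rfl⟩ | rfl <;> simp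

theorem time_eq_headD_of_liftPath_eq_cons {p : List V} {ts : List ℕ} (h : p.length = ts.length + 1)
    {f : TEdge (Option V)} {P : List (TEdge (Option V))} (hf : liftPath n p ts = f :: P) :
    f.time = ts.headD n := by
  have := congrArg List.head? (map_time_liftPath (n := n) h)
  cases ts <;> simp_all

theorem isWalk_liftPath (hτ : τ < n) {a : V} {p : List V} {ts : List ℕ}
    (hhead : p.head? = some a) (hlast : p.getLast? = some t)
    (hchain : p.IsChain fun u v => (u, v) ∈ Eg) (hts : IsSchedule τ ts)
    (hlen : p.length = ts.length + 1) :
    IsWalk (blowUpEdges Eg t n τ) (some a) none (liftPath n p ts) := by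
  induction p, ts using liftPath.induct generalizing a with
  | case1 => simp at hhead
  | case2 a' ts =>
    obtain rfl : a' = a := by simpa using hhead
    obtain rfl : a' = t := by simpa using hlast
    exact isWalk_singleton_iff.2 ⟨Or.inr rfl, rfl, rfl⟩
  | case3 a' b p ts ih =>
    obtain rfl : a' = a := by simpa using hhead
    obtain ⟨i, ts, rfl⟩ :=
      List.exists_cons_of_length_pos (show 0 < ts.length by simp at hlen; omega)
    obtain ⟨hab, hchain⟩ := List.isChain_cons_cons.1 hchain
    obtain ⟨hi, hi₁, hiτ, hts⟩ := isSchedule_cons_iff.1 hts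
    have hwalk := ih rfl (by simpa using hlast) hchain hts (by simpa using hlen)
    obtain ⟨f, P, hfP⟩ := List.exists_cons_of_length_pos
      (by simp [length_liftPath] : 0 < (liftPath n (b :: p) ts).length)
    simp only [liftPath, List.headD_cons, List.tail_cons, hfP] at hwalk ⊢
    refine isWalk_cons_cons_iff.2 ⟨Or.inl ⟨a', b, i, hab, hi₁, hiτ, rfl⟩, rfl, ?_, hwalk⟩
    rw [time_eq_headD_of_liftPath_eq_cons (by simpa using hlen) hfP]
    cases ts with
    | nil => exact hiτ.trans_lt hτ
    | cons j ts => simpa using hi j rfl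

theorem exists_liftPath_of_isWalk {a : V} {P : List (TEdge (Option V))}
    (hP : IsWalk (blowUpEdges Eg t n τ) (some a) none P) :
    ∃ p ts, p.head? = some a ∧ p.getLast? = some t ∧ (p.IsChain fun u v => (u, v) ∈ Eg) ∧
      IsSchedule τ ts ∧ p.length = ts.length + 1 ∧ P = liftPath n p ts := by
  induction P generalizing a with
  | nil => exact absurd rfl hP.1
  | cons e P ih =>
    cases P with
    | nil =>
      obtain ⟨he, hsrc, hdst⟩ := isWalk_singleton_iff.1 hP
      rcases he with ⟨u, v, i, -, -, -, rfl⟩ | rfl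
      · simp at hdst
      · obtain rfl : t = a := by simpa using hsrc
        exact ⟨[t], [], rfl, rfl, List.isChain_singleton t, ⟨List.isChain_nil, by simp⟩, rfl, rfl⟩
    | cons f P =>
      obtain ⟨he, hsrc, htime, hwalk⟩ := isWalk_cons_cons_iff.1 hP
      rcases he with ⟨u, v, i, huv, hi₁, hiτ, rfl⟩ | rfl
      · obtain rfl : u = a := by simpa using hsrc
        obtain ⟨p, ts, hhead, hlast, hchain, hts, hlen, hfP⟩ := ih hwalk
        obtain ⟨p, rfl⟩ : ∃ p', p = v :: p' := by
          cases p with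
          | nil => simp at hhead
          | cons v' p => exact ⟨p, by simpa using hhead⟩
        refine ⟨u :: v :: p, i :: ts, rfl, by simpa using hlast,
          List.isChain_cons_cons.2 ⟨huv, hchain⟩, isSchedule_cons_iff.2 ⟨?_, hi₁, hiτ, hts⟩,
          by simpa using hlen, by simp [liftPath, hfP]⟩
        have := time_eq_headD_of_liftPath_eq_cons hlen hfP.symm
        cases ts with
        | nil => simp
        | cons j ts => simp_all
      · exact (src_ne_none_of_mem_blowUpEdges (hwalk.2.1 f (by simp)) (hwalk.2.2.2.1 f rfl)).elim

theorem setOf_isPath_blowUp_length_eq (hτ : τ < n) (ℓ : ℕ) :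
    {P | IsPath (blowUpEdges Eg t n τ) (some s) none P ∧ P.length = ℓ + 1} =
      (fun q : List V × List ℕ => liftPath n q.1 q.2) ''
        ({p | SIsPath Eg s t p ∧ p.length = ℓ + 1} ×ˢ {ts | IsSchedule τ ts ∧ ts.length = ℓ}) := by
  ext P
  simp only [Set.mem_ofPred_eq, Set.mem_image, Set.mem_prod, Prod.exists, sIsPath_iff]
  constructor
  · rintro ⟨⟨hwalk, hnodup⟩, hlen⟩
    obtain ⟨p, ts, hhead, hlast, hchain, hts, hlen', rfl⟩ := exists_liftPath_of_isWalk hwalk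
    have hp : p ≠ [] := by rintro rfl; simp at hhead
    rw [length_liftPath] at hlen
    exact ⟨p, ts, ⟨⟨⟨hhead, hlast, hchain, (nodup_visitedVerts_liftPath hp ts).1 hnodup⟩, hlen⟩,
      hts, by omega⟩, rfl⟩
  · rintro ⟨p, ts, ⟨⟨⟨hhead, hlast, hchain, hnodup⟩, hlen⟩, hts, rfl⟩, rfl⟩
    have hp : p ≠ [] := by rintro rfl; simp at hhead
    exact ⟨⟨isWalk_liftPath hτ hhead hlast hchain hts hlen,
      (nodup_visitedVerts_liftPath hp ts).2 hnodup⟩, by rw [length_liftPath, hlen]⟩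

theorem ncard_setOf_isPath_blowUp_length_eq (hτ : τ < n) (ℓ : ℕ) :
    {P | IsPath (blowUpEdges Eg t n τ) (some s) none P ∧ P.length = ℓ + 1}.ncard =
      τ.choose ℓ * {p | SIsPath Eg s t p ∧ p.length = ℓ + 1}.ncard := by
  rw [setOf_isPath_blowUp_length_eq hτ, Set.InjOn.ncard_image, Set.ncard_prod,
    ncard_setOf_isSchedule_length_eq, mul_comm]
  rintro ⟨p, ts⟩ ⟨⟨-, hp⟩, -, hts⟩ ⟨p', ts'⟩ ⟨⟨-, hp'⟩, -, hts'⟩ heq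
  obtain ⟨rfl, rfl⟩ := liftPath_inj (by omega) (by omega) heq
  rfl

theorem finite_setOf_isPath_blowUp_length_eq [Finite V] (hτ : τ < n) (ℓ : ℕ) :
    {P | IsPath (blowUpEdges Eg t n τ) (some s) none P ∧ P.length = ℓ + 1}.Finite := by
  rw [setOf_isPath_blowUp_length_eq hτ, setOf_isSchedule_length_eq]
  exact ((List.finite_setOf_and_length_eq _ _).prod (Finset.finite_toSet _)).image _

theorem ncard_setOf_isPath_blowUp_length_le [Finite V] (hst : s ≠ t) (hτ : τ < n) :
    {P | IsPath (blowUpEdges Eg t n τ) (some s) none P ∧ P.length ≤ τ + 1}.ncard =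
      ∑ ℓ ∈ Finset.Icc 1 τ, τ.choose ℓ * {p | SIsPath Eg s t p ∧ p.length = ℓ + 1}.ncard := by
  rw [ncard_setOf_length_le_eq_sum τ ?_ (finite_setOf_isPath_blowUp_length_eq hτ)]
  · exact Finset.sum_congr rfl fun ℓ _ => ncard_setOf_isPath_blowUp_length_eq hτ ℓ
  rintro P ⟨hwalk, -⟩
  obtain ⟨p, ts, hhead, hlast, -, -, -, rfl⟩ := exists_liftPath_of_isWalk hwalk
  rw [length_liftPath]
  exact List.two_le_length_of_head?_of_getLast? hhead hlast hst

theorem ncard_setOf_sIsPath [Fintype V] (hst : s ≠ t) :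
    {p | SIsPath Eg s t p}.ncard =
      ∑ ℓ ∈ Finset.Icc 1 (Fintype.card V - 1), {p | SIsPath Eg s t p ∧ p.length = ℓ + 1}.ncard := by
  have hcard : Fintype.card V - 1 + 1 = Fintype.card V :=
    Nat.sub_add_cancel (Fintype.card_pos_iff.2 ⟨s⟩)
  have hlen : {p | SIsPath Eg s t p} =
      {p | SIsPath Eg s t p ∧ p.length ≤ Fintype.card V - 1 + 1} := by
    ext p
    simpa [hcard] using fun hp : SIsPath Eg s t p => hp.2.2.1.length_le_card
  rw [hlen, ncard_setOf_length_le_eq_sum _ ?_ fun ℓ => List.finite_setOf_and_length_eq _ _]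
  intro p hp
  obtain ⟨hhead, hlast, -, -⟩ := sIsPath_iff.1 hp
  exact List.two_le_length_of_head?_of_getLast? hhead hlast hst

end BlowUp

/-- with x_ℓ the number of simple static (s,t)-paths of length ℓ
and y_τ the number of temporal (s,z)-paths of length ≤ τ+1 in the τ-layer
blow-up G_τ (with appended edge (t,z,n,1)), one has
y_τ = Σ_{ℓ=1}^{τ} C(τ,ℓ)·x_ℓ, hence x_τ = y_τ − Σ_{i=1}^{τ-1} C(τ,i)·x_i, and
Σ_ℓ x_ℓ is the total number of simple (s,t)-paths. -/
theorem stmt15 [Fintype V] (Eg : Set (V × V)) (s t : V) (hst : s ≠ t) :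
    let n := Fintype.card V
    let Eτ : ℕ → Set (TEdge (Option V)) := fun τ =>
      {e | ∃ u v i, (u, v) ∈ Eg ∧ 1 ≤ i ∧ i ≤ τ ∧
            e = ⟨some u, some v, i, 1, 0⟩} ∪ {⟨some t, none, n, 1, 0⟩}
    let x : ℕ → ℕ := fun ℓ =>
      {p : List V | SIsPath Eg s t p ∧ p.length = ℓ + 1}.ncard
    let y : ℕ → ℕ := fun τ =>
      {P : List (TEdge (Option V)) |
        IsPath (Eτ τ) (some s) none P ∧ P.length ≤ τ + 1}.ncard
    (∀ τ, 1 ≤ τ → τ ≤ n - 1 →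
      y τ = ∑ ℓ ∈ Finset.Icc 1 τ, τ.choose ℓ * x ℓ) ∧
    (∀ τ, 1 ≤ τ → τ ≤ n - 1 →
      x τ = y τ - ∑ i ∈ Finset.Icc 1 (τ - 1), τ.choose i * x i) ∧
    {p : List V | SIsPath Eg s t p}.ncard = ∑ ℓ ∈ Finset.Icc 1 (n - 1), x ℓ := by
  intro n Eτ x y
  have hn : 0 < n := Fintype.card_pos_iff.2 ⟨s⟩
  have hy : ∀ τ, 1 ≤ τ → τ ≤ n - 1 → y τ = ∑ ℓ ∈ Finset.Icc 1 τ, τ.choose ℓ * x ℓ :=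
    fun τ _ hτ => ncard_setOf_isPath_blowUp_length_le hst (by omega)
  refine ⟨hy, fun τ hτ₁ hτ => ?_, ncard_setOf_sIsPath hst⟩
  obtain ⟨k, rfl⟩ : ∃ k, τ = k + 1 := ⟨τ - 1, by omega⟩
  have hyτ := hy (k + 1) hτ₁ hτ
  rw [Finset.sum_Icc_succ_top hτ₁, Nat.choose_self, one_mul] at hyτ
  rw [hyτ, Nat.add_sub_cancel, Nat.add_sub_cancel_left]
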